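/- Let G be a graph with an RDV representation on a rooted tree T, and let v_1,...,v_n be a bottom-up enumeration. Then for every i, the vertex v_i is a simple vertex of the subgraph of G induced by {v_i, v_{i+1}, ..., v_n}. -/

import Mathlib

/-!
If `w` is a neighbour of `v_i` with `i ≤ w`, then `t(w)` is no deeper than `t(v_i)`, and two
ancestors of a common node are comparable, so `P(w)` passes through `t(v_i)`. Hence `N[v_i]`
in the tail graph is a clique, and listing it by decreasing depth of the top nodes makes the
closed neighbourhoods increase.
-/

namespace Paper

/-- Has vertex `v` already been matched by the edge list `M`? -/
def matchedB {n : ℕ} (M : List (Fin n × Fin n)) (v : Fin n) : Bool :=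
  M.any fun e => e.1 = v || e.2 = v

/-- One step of the greedy matching algorithm: process vertex `i`; if it is unmatched
and has an unmatched neighbour, match it to the unmatched neighbour of smallest index. -/
def greedyStep {n : ℕ} (G : SimpleGraph (Fin n)) [DecidableRel G.Adj]
    (M : List (Fin n × Fin n)) (i : Fin n) : List (Fin n × Fin n) :=
  if matchedB M i then M
  else
    if h : (Finset.univ.filter fun j => G.Adj i j ∧ matchedB M j = false).Nonempty then
      (i, (Finset.univ.filter fun j => G.Adj i j ∧ matchedB M j = false).min' h) :: M
    else M

/-- The greedy matching algorithm, processing the vertices `v_1, …, v_n` in order. -/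
def greedy {n : ℕ} (G : SimpleGraph (Fin n)) [DecidableRel G.Adj] : List (Fin n × Fin n) :=
  (List.finRange n).foldl (greedyStep G) []

/-- The partial matching produced by the greedy algorithm after processing the
first `k` vertices. -/
def greedyPrefix {n : ℕ} (G : SimpleGraph (Fin n)) [DecidableRel G.Adj] (k : ℕ) :
    List (Fin n × Fin n) :=
  ((List.finRange n).take k).foldl (greedyStep G) []

/-- One step of the delayed greedy algorithm: state is (matching, free set `F`);
when processing `j`, if `j` has a neighbour in `F`, match `j` to the smallest-index
such neighbour and remove it from `F`; otherwise add `j` to `F`. -/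
def delayedStep {n : ℕ} (G : SimpleGraph (Fin n)) [DecidableRel G.Adj]
    (s : List (Fin n × Fin n) × Finset (Fin n)) (j : Fin n) :
    List (Fin n × Fin n) × Finset (Fin n) :=
  if h : (s.2.filter fun i => G.Adj i j).Nonempty then
    (((s.2.filter fun i => G.Adj i j).min' h, j) :: s.1,
      s.2.erase ((s.2.filter fun i => G.Adj i j).min' h))
  else (s.1, insert j s.2)

/-- The delayed greedy matching algorithm. -/
def delayedGreedy {n : ℕ} (G : SimpleGraph (Fin n)) [DecidableRel G.Adj] :
    List (Fin n × Fin n) :=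
  ((List.finRange n).foldl (delayedStep G) ([], ∅)).1

/-- `M` is a matching of `G`: its members are edges of `G` and are pairwise
vertex-disjoint. -/
def IsMatchingL {n : ℕ} (G : SimpleGraph (Fin n)) (M : List (Fin n × Fin n)) : Prop :=
  (∀ e ∈ M, G.Adj e.1 e.2) ∧
    ∀ e ∈ M, ∀ f ∈ M, e ≠ f → e.1 ≠ f.1 ∧ e.1 ≠ f.2 ∧ e.2 ≠ f.1 ∧ e.2 ≠ f.2

/-- A finite rooted tree on node set `Fin N`, given by a parent function and a
depth function (distance to the root). -/
structure RootedTree (N : ℕ) where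
  parent : Fin N → Fin N
  root : Fin N
  depth : Fin N → ℕ
  depth_root : depth root = 0
  parent_root : parent root = root
  depth_parent : ∀ i, i ≠ root → depth (parent i) + 1 = depth i

/-- `T.Anc u w` : node `u` is an ancestor (possibly equal) of node `w`. -/
def RootedTree.Anc {N : ℕ} (T : RootedTree N) (u w : Fin N) : Prop :=
  ∃ k : ℕ, T.parent^[k] w = u

/-- A node is a leaf if it has no children. -/
def RootedTree.IsLeaf {N : ℕ} (T : RootedTree N) (u : Fin N) : Prop :=
  ∀ w, T.parent w = u → w = u

/-- The data of an RDV representation: a rooted host tree `T` and, for each vertex `v`,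
a downward path `P(v)` going from its top node `t v` down to its bottom node `b v`. -/
structure RDVData (N n : ℕ) where
  T : RootedTree N
  t : Fin n → Fin N
  b : Fin n → Fin N
  downward : ∀ v, T.Anc (t v) (b v)

/-- The node `u` lies on the downward path `P(v)`. -/
def RDVData.onPath {N n : ℕ} (R : RDVData N n) (v : Fin n) (u : Fin N) : Prop :=
  R.T.Anc (R.t v) u ∧ R.T.Anc u (R.b v)

/-- `R` is an RDV representation of `G`: distinct vertices are adjacent iff their
downward paths share a node. -/
def RDVData.IsRep {N n : ℕ} (R : RDVData N n) (G : SimpleGraph (Fin n)) : Prop :=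
  ∀ u w : Fin n, u ≠ w → (G.Adj u w ↔ ∃ node, R.onPath u node ∧ R.onPath w node)

/-- The identity enumeration `v_1, …, v_n` (i.e. the order on `Fin n`) is a bottom-up
enumeration: vertices are sorted by decreasing depth of the top node `t v`. -/
def RDVData.BottomUp {N n : ℕ} (R : RDVData N n) : Prop :=
  ∀ i j : Fin n, i ≤ j → R.T.depth (R.t j) ≤ R.T.depth (R.t i)

/-- A planar (left-to-right) coordinate structure on a rooted tree: an injective
index on the leaves so that the leaf descendants of every node occupy a contiguous
range of indices, together with the leftmost leaf descendant `lmost` and rightmost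
leaf descendant `rmost` of every node. -/
structure PlanarCoords {N : ℕ} (T : RootedTree N) where
  idx : Fin N → ℕ
  lmost : Fin N → Fin N
  rmost : Fin N → Fin N
  idx_inj : ∀ u w, T.IsLeaf u → T.IsLeaf w → idx u = idx w → u = w
  lmost_leaf : ∀ u, T.IsLeaf (lmost u)
  lmost_desc : ∀ u, T.Anc u (lmost u)
  lmost_min : ∀ u lf, T.IsLeaf lf → T.Anc u lf → idx (lmost u) ≤ idx lf
  rmost_leaf : ∀ u, T.IsLeaf (rmost u)
  rmost_desc : ∀ u, T.Anc u (rmost u)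
  rmost_max : ∀ u lf, T.IsLeaf lf → T.Anc u lf → idx lf ≤ idx (rmost u)
  contiguous : ∀ u lf lf' lf'', T.IsLeaf lf → T.IsLeaf lf' → T.IsLeaf lf'' →
    T.Anc u lf → T.Anc u lf' → idx lf ≤ idx lf'' → idx lf'' ≤ idx lf' → T.Anc u lf''

/-- The x-coordinate of a node: the index of its leftmost leaf descendant. -/
def PlanarCoords.x {N : ℕ} {T : RootedTree N} (P : PlanarCoords T) (u : Fin N) : ℕ :=
  P.idx (P.lmost u)

/-- The closed neighbourhood `N[v]`. -/
def closedNbr {n : ℕ} (G : SimpleGraph (Fin n)) (v : Fin n) : Set (Fin n) :=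
  insert v {w | G.Adj v w}

/-- `v` is a simple vertex: `N[v]` is a clique that can be ordered
`w_1, …, w_k` with `N[w_1] ⊆ N[w_2] ⊆ … ⊆ N[w_k]`. -/
def IsSimpleVx {n : ℕ} (G : SimpleGraph (Fin n)) (v : Fin n) : Prop :=
  G.IsClique (closedNbr G v) ∧
    ∃ l : List (Fin n), (∀ w, w ∈ l ↔ w ∈ closedNbr G v) ∧
      l.Chain' fun a b => closedNbr G a ⊆ closedNbr G b

/-- The subgraph of `G` induced by the tail vertices `{v_i, …, v_n}`. -/
def tailGraph {n : ℕ} (G : SimpleGraph (Fin n)) (i : Fin n) : SimpleGraph (Fin n) where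
  Adj a b := G.Adj a b ∧ i ≤ a ∧ i ≤ b
  symm := ⟨fun a b h => ⟨h.1.symm, h.2.2, h.2.1⟩⟩
  loopless := ⟨fun a h => G.loopless.irrefl a h.1⟩

/-- `G` is chordal: every cycle of length at least 4 has a chord, i.e. an edge
between two (necessarily non-consecutive) vertices of the cycle that is not an
edge of the cycle. -/
def Chordal {V : Type*} (G : SimpleGraph V) : Prop :=
  ∀ (v : V) (c : G.Walk v v), c.IsCycle → 4 ≤ c.length →
    ∃ u w, u ∈ c.support ∧ w ∈ c.support ∧ G.Adj u w ∧ s(u, w) ∉ c.edges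

/-- `S` is (the node set of) a subtree of the rooted tree `T`. -/
def IsSubtree {N : ℕ} (T : RootedTree N) (S : Set (Fin N)) : Prop :=
  S.Nonempty ∧ ∃ top ∈ S, (∀ u ∈ S, T.Anc top u) ∧ ∀ u ∈ S, u ≠ top → T.parent u ∈ S

namespace RootedTree

variable {N : ℕ} (T : RootedTree N)

theorem eq_root_of_depth_eq_zero {u : Fin N} (h : T.depth u = 0) : u = T.root := by
  by_contra hu
  have := T.depth_parent u hu
  omega

theorem depth_iterate_parent (k : ℕ) (u : Fin N) :
    T.depth (T.parent^[k] u) = T.depth u - min k (T.depth u) := by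
  induction k with
  | zero => simp
  | succ k ih =>
    rw [Function.iterate_succ_apply']
    by_cases h : T.parent^[k] u = T.root
    · rw [h, T.parent_root, T.depth_root]
      rw [h, T.depth_root] at ih
      omega
    · have := T.depth_parent _ h
      omega

theorem anc_refl (u : Fin N) : T.Anc u u := ⟨0, rfl⟩

variable {T}

theorem Anc.trans {a b c : Fin N} (hab : T.Anc a b) (hbc : T.Anc b c) : T.Anc a c := by
  obtain ⟨k, rfl⟩ := hab
  obtain ⟨m, rfl⟩ := hbc
  exact ⟨k + m, Function.iterate_add_apply _ _ _ _⟩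

theorem Anc.depth_le {a b : Fin N} (h : T.Anc a b) : T.depth a ≤ T.depth b := by
  obtain ⟨k, rfl⟩ := h
  rw [T.depth_iterate_parent]
  omega

theorem anc_of_anc_of_depth_le {a b c : Fin N} (hac : T.Anc a c) (hbc : T.Anc b c)
    (hd : T.depth a ≤ T.depth b) : T.Anc a b := by
  obtain ⟨k, rfl⟩ := hac
  obtain ⟨m, rfl⟩ := hbc
  rcases le_or_gt m k with hmk | hkm
  · exact ⟨k - m, by rw [← Function.iterate_add_apply, Nat.sub_add_cancel hmk]⟩
  · -- otherwise both iterates have already reached the root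
    rw [T.depth_iterate_parent, T.depth_iterate_parent] at hd
    rw [T.eq_root_of_depth_eq_zero (u := T.parent^[k] c) (by rw [T.depth_iterate_parent]; omega),
      T.eq_root_of_depth_eq_zero (u := T.parent^[m] c) (by rw [T.depth_iterate_parent]; omega)]
    exact T.anc_refl _

end RootedTree

namespace RDVData

variable {N n : ℕ} {R : RDVData N n}

theorem onPath_top (R : RDVData N n) (v : Fin n) : R.onPath v (R.t v) :=
  ⟨R.T.anc_refl _, R.downward v⟩

theorem onPath.anc_of_depth_le {v : Fin n} {x y : Fin N} (hx : R.onPath v x)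
    (hy : R.onPath v y) (hd : R.T.depth x ≤ R.T.depth y) : R.T.Anc x y :=
  RootedTree.anc_of_anc_of_depth_le hx.2 hy.2 hd

theorem onPath.of_anc {v : Fin n} {x y : Fin N} (hx : R.onPath v x) (hyx : R.T.Anc y x)
    (hd : R.T.depth (R.t v) ≤ R.T.depth y) : R.onPath v y :=
  ⟨RootedTree.anc_of_anc_of_depth_le hx.1 hyx hd, hyx.trans hx.2⟩

theorem IsRep.onPath_top_of_adj {G : SimpleGraph (Fin n)} (hrep : R.IsRep G) {v w : Fin n}
    (hvw : G.Adj v w) (hd : R.T.depth (R.t w) ≤ R.T.depth (R.t v)) :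
    R.onPath w (R.t v) := by
  obtain ⟨u, hvu, hwu⟩ := (hrep v w hvw.ne).mp hvw
  exact hwu.of_anc hvu.1 hd

end RDVData

theorem isSimpleVx_of_isClique_of_monotone {n : ℕ} {α : Type*} [LinearOrder α]
    {G : SimpleGraph (Fin n)} {v : Fin n} (f : Fin n → α)
    (hclique : G.IsClique (closedNbr G v))
    (hmono : ∀ a ∈ closedNbr G v, ∀ b ∈ closedNbr G v,
      f a ≤ f b → closedNbr G a ⊆ closedNbr G b) :
    IsSimpleVx G v := by
  classical
  let l := (Finset.univ.filter (· ∈ closedNbr G v)).toList.mergeSort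
    fun a b => decide (f a ≤ f b)
  have hl : ∀ w, w ∈ l ↔ w ∈ closedNbr G v := by simp [l]
  have hsorted : l.Pairwise fun a b => decide (f a ≤ f b) :=
    List.pairwise_mergeSort
      (fun _ _ _ hab hbc => decide_eq_true ((of_decide_eq_true hab).trans (of_decide_eq_true hbc)))
      (fun a b => by simp [le_total]) _
  refine ⟨hclique, l, hl, (hsorted.imp_of_mem fun ha hb hab => ?_).isChain⟩
  exact hmono _ ((hl _).mp ha) _ ((hl _).mp hb) (of_decide_eq_true hab)

section TailGraph

variable {N n : ℕ} {G : SimpleGraph (Fin n)} {R : RDVData N n}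

theorem onPath_top_of_mem_closedNbr_tailGraph (hrep : R.IsRep G) (hbu : R.BottomUp)
    {i w : Fin n} (hw : w ∈ closedNbr (tailGraph G i) i) : i ≤ w ∧ R.onPath w (R.t i) := by
  rcases hw with rfl | ⟨hiw, -, hle⟩
  · exact ⟨le_rfl, R.onPath_top w⟩
  · exact ⟨hle, hrep.onPath_top_of_adj hiw (hbu i w hle)⟩

theorem isClique_closedNbr_tailGraph (hrep : R.IsRep G) (hbu : R.BottomUp) (i : Fin n) :
    (tailGraph G i).IsClique (closedNbr (tailGraph G i) i) := by
  intro a ha b hb hab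
  obtain ⟨hia, hpa⟩ := onPath_top_of_mem_closedNbr_tailGraph hrep hbu ha
  obtain ⟨hib, hpb⟩ := onPath_top_of_mem_closedNbr_tailGraph hrep hbu hb
  exact ⟨(hrep a b hab).mpr ⟨R.t i, hpa, hpb⟩, hia, hib⟩

/-- A neighbour `z` of `a` meets `P(a)` at a node `u`; `P(b)` and `P(z)` then share
`t(v_i)` if `u` lies below it, and `u` otherwise. -/
theorem closedNbr_tailGraph_subset (hrep : R.IsRep G) (hbu : R.BottomUp) {i a b : Fin n}
    (ha : a ∈ closedNbr (tailGraph G i) i) (hb : b ∈ closedNbr (tailGraph G i) i)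
    (hab : R.T.depth (R.t b) ≤ R.T.depth (R.t a)) :
    closedNbr (tailGraph G i) a ⊆ closedNbr (tailGraph G i) b := by
  intro z hz
  by_cases hzb : z = b
  · exact Or.inl hzb
  right
  rcases hz with rfl | ⟨haz, -, hiz⟩
  · exact isClique_closedNbr_tailGraph hrep hbu i hb ha (Ne.symm hzb)
  obtain ⟨-, hpa⟩ := onPath_top_of_mem_closedNbr_tailGraph hrep hbu ha
  obtain ⟨hib, hpb⟩ := onPath_top_of_mem_closedNbr_tailGraph hrep hbu hb
  obtain ⟨u, hau, hzu⟩ := (hrep a z haz.ne).mp haz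
  refine ⟨(hrep b z (Ne.symm hzb)).mpr ?_, hib, hiz⟩
  rcases le_or_gt (R.T.depth (R.t i)) (R.T.depth u) with hiu | hui
  · exact ⟨R.t i, hpb, hzu.of_anc (hpa.anc_of_depth_le hau hiu) (hbu i z hiz)⟩
  · have hut : R.T.Anc u (R.t i) := hau.anc_of_depth_le hpa hui.le
    exact ⟨u, hpb.of_anc hut (hab.trans hau.1.depth_le), hzu⟩

end TailGraph

/-- In an RDV representation with a bottom-up enumeration, every `v_i`
is a simple vertex of the subgraph induced by `{v_i, v_{i+1}, …, v_n}`. -/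
theorem stmt12 {N n : ℕ} (G : SimpleGraph (Fin n)) (R : RDVData N n)
    (hrep : R.IsRep G) (hbu : R.BottomUp) :
    ∀ i : Fin n, IsSimpleVx (tailGraph G i) i := fun i =>
  isSimpleVx_of_isClique_of_monotone (fun w => OrderDual.toDual (R.T.depth (R.t w)))
    (isClique_closedNbr_tailGraph hrep hbu i)
    fun _ ha _ hb hab => closedNbr_tailGraph_subset hrep hbu ha hb hab

end Paper
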